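/- arXiv:2601.14987 — 2 statements merged into one kernel-verified Lean document; each statement's English description precedes it below -/
import Mathlib

section
/- Fix i, j ∈ {1,…,N_k} and let the type-dependent decoding metric be the generalized maximum mutual information metric q(i, P) = I(P) − R_i with R_i = t·H(P_i). Then for any thresholds Δ_i, Δ_j and any symmetric joint-type-dependent distance d, min_{P ∈ Γ_ij} { D(P_{XY} ‖ Q_{μ(i)} × W) + | I_P(X̄; X, Y) − R_j |⁺ } ≥ E_r(Q_{μ(i)}, R_i), where Γ_ij = { P_{XX̄Y} : P_X = Q_{μ(i)}, P_X̄ = Q_{μ(j)}, d(P_{XX̄}) ≥ max(Δ_i, Δ_j), I(P_{XY}) − R_i ≤ I(P_{X̄Y}) − R_j } (minimum over empty set = +∞). Consequently E_rgv^{(ij)}(P_V, W) ≥ t·e(R_i/t, P_V) + E_r(Q_{μ(i)}, R_i). -/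
open scoped BigOperators Classical

noncomputable section

namespace RGV

variable {α β γ : Type*}

/-- Empirical distribution (type) of a sequence. -/
def empDist [DecidableEq α] {n : ℕ} (x : Fin n → α) : α → ℝ :=
  fun a => ((Finset.univ.filter fun i => x i = a).card : ℝ) / n

/-- Joint empirical distribution of a pair of sequences. -/
def empDist2 [DecidableEq α] [DecidableEq β] {n : ℕ} (x : Fin n → α) (y : Fin n → β) :
    α × β → ℝ :=
  fun p => ((Finset.univ.filter fun i => x i = p.1 ∧ y i = p.2).card : ℝ) / n

/-- Joint empirical distribution of a triple of sequences. -/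
def empDist3 [DecidableEq α] [DecidableEq β] [DecidableEq γ] {n : ℕ}
    (x : Fin n → α) (x' : Fin n → β) (y : Fin n → γ) : α × β × γ → ℝ :=
  fun p => ((Finset.univ.filter fun i => x i = p.1 ∧ x' i = p.2.1 ∧ y i = p.2.2).card : ℝ) / n

/-- The type class `T^n(Q)`: all sequences in `αⁿ` with empirical distribution `Q`. -/
def typeClass [Fintype α] [DecidableEq α] (n : ℕ) (Q : α → ℝ) : Finset (Fin n → α) :=
  Finset.univ.filter fun x => empDist x = Q

/-- `p` is a probability distribution on the finite set `α`. -/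
def IsProbDist [Fintype α] (p : α → ℝ) : Prop :=
  (∀ a, 0 ≤ p a) ∧ ∑ a, p a = 1

/-- Shannon entropy (natural logarithm; `Real.log 0 = 0` gives the `0 log 0 = 0` convention). -/
def entropy [Fintype α] (p : α → ℝ) : ℝ := -∑ a, p a * Real.log (p a)

/-- Kullback–Leibler divergence (convention `0 log 0 = 0`). -/
def klDiv [Fintype α] (p q : α → ℝ) : ℝ := ∑ a, p a * Real.log (p a / q a)

def fstMarg [Fintype β] (p : α × β → ℝ) : α → ℝ := fun a => ∑ b, p (a, b)

def sndMarg [Fintype α] (p : α × β → ℝ) : β → ℝ := fun b => ∑ a, p (a, b)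

/-- Mutual information of a joint distribution on `α × β`. -/
def mutualInfo [Fintype α] [Fintype β] (p : α × β → ℝ) : ℝ :=
  ∑ q, p q * Real.log (p q / (fstMarg p q.1 * sndMarg p q.2))

/- Marginals of a joint distribution on a triple `X × X̄ × Y` (ordering `(x, x̄, y)`). -/

def margX [Fintype β] [Fintype γ] (p : α × β × γ → ℝ) : α → ℝ :=
  fun a => ∑ b, ∑ c, p (a, b, c)

def margXbar [Fintype α] [Fintype γ] (p : α × β × γ → ℝ) : β → ℝ :=
  fun b => ∑ a, ∑ c, p (a, b, c)

def margXY [Fintype β] (p : α × β × γ → ℝ) : α × γ → ℝ :=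
  fun q => ∑ b, p (q.1, b, q.2)

def margXbarY [Fintype α] (p : α × β × γ → ℝ) : β × γ → ℝ :=
  fun q => ∑ a, p (a, q.1, q.2)

def margXXbar [Fintype γ] (p : α × β × γ → ℝ) : α × β → ℝ :=
  fun q => ∑ c, p (q.1, q.2, c)

/-- Mutual information `I_P(X̄; (X,Y))` for a joint distribution `P` on `X × X̄ × Y`. -/
def miXbarXY [Fintype α] [Fintype β] [Fintype γ] (p : α × β × γ → ℝ) : ℝ :=
  mutualInfo (fun q : β × α × γ => p (q.2.1, q.1, q.2.2))

/-- Bhattacharyya distance `d_W(x, x') = -log Σ_y √(W(y|x) W(y|x'))`. -/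
def dW {𝒳 𝒴 : Type*} [Fintype 𝒴] (W : 𝒳 → 𝒴 → ℝ) (x x' : 𝒳) : ℝ :=
  -Real.log (∑ y, Real.sqrt (W x y * W x' y))

/-- Source reliability function `e(R, P_V) = min_{Q : H(Q) ≥ R} D(Q‖P_V)`. -/
def srcRel {𝒱 : Type*} [Fintype 𝒱] (R : ℝ) (PV : 𝒱 → ℝ) : ℝ :=
  sInf {z | ∃ Q : 𝒱 → ℝ, IsProbDist Q ∧ R ≤ entropy Q ∧ z = klDiv Q PV}

/-- Random-coding error exponent
`E_r(Q, R) = min_{P_{XY} : P_X = Q} D(P‖Q×W) + |I_P(X;Y) − R|⁺`. -/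
def Er {𝒳 𝒴 : Type*} [Fintype 𝒳] [Fintype 𝒴] (W : 𝒳 → 𝒴 → ℝ) (Q : 𝒳 → ℝ) (R : ℝ) : ℝ :=
  sInf {z | ∃ P : 𝒳 × 𝒴 → ℝ, IsProbDist P ∧ fstMarg P = Q ∧
    z = klDiv P (fun r => Q r.1 * W r.1 r.2) + max (mutualInfo P - R) 0}

/-- Csiszár's generalized expurgated exponent (with slack `δ` in the mutual
information constraint):
`E'_ex,δ(Q, 𝒬, R) = min_{Λ : Λ_X = Q, Λ_X̄ ∈ 𝒬, I(Λ) ≤ R+δ} E_Λ[d_W] + I(Λ) − R`. -/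
def EexPrime {𝒳 𝒴 : Type*} [Fintype 𝒳] [Fintype 𝒴] (W : 𝒳 → 𝒴 → ℝ) (Q : 𝒳 → ℝ)
    (Qset : Set (𝒳 → ℝ)) (R δ : ℝ) : ℝ :=
  sInf ((fun Λ : 𝒳 × 𝒳 → ℝ => (∑ p : 𝒳 × 𝒳, Λ p * dW W p.1 p.2) + mutualInfo Λ - R) ''
    {Λ | IsProbDist Λ ∧ fstMarg Λ = Q ∧ sndMarg Λ ∈ Qset ∧ mutualInfo Λ ≤ R + δ})

/-- The data of the random Gilbert–Varshamov joint source-channel code construction: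
an enumeration `srcType` of the types of `𝒱^k` (ordered by their index in `Fin Nk`),
a collection `Q` of codeword types with assignment `μ`, a symmetric distance `dd`
depending on a pair of sequences only through their joint type,
minimum-distance thresholds `Δ`, and an ordering `ord` of the source messages in which
the source-type index is nondecreasing. -/
structure Setup (𝒱 𝒳 : Type*) [Fintype 𝒱] [DecidableEq 𝒱] [Fintype 𝒳] [DecidableEq 𝒳]
    (k n : ℕ) where
  Nk : ℕ
  srcType : Fin Nk → 𝒱 → ℝ
  srcType_inj : Function.Injective srcType
  srcType_isType : ∀ i, ∃ v : Fin k → 𝒱, empDist v = srcType i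
  cls : (Fin k → 𝒱) → Fin Nk
  cls_spec : ∀ v, empDist v = srcType (cls v)
  m : ℕ
  Q : Fin m → 𝒳 → ℝ
  Q_isType : ∀ c, ∃ x : Fin n → 𝒳, empDist x = Q c
  μ : Fin Nk → Fin m
  dd : (𝒳 × 𝒳 → ℝ) → ℝ
  dd_symm : ∀ P : 𝒳 × 𝒳 → ℝ, dd (fun p => P (p.2, p.1)) = dd P
  Δ : Fin Nk → ℝ
  ord : (Fin k → 𝒱) ≃ Fin (Fintype.card (Fin k → 𝒱))
  ord_mono : ∀ v w : Fin k → 𝒱, ord v ≤ ord w → cls v ≤ cls w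

namespace Setup

variable {𝒱 𝒳 𝒴 : Type*} [Fintype 𝒱] [DecidableEq 𝒱] [Fintype 𝒳] [DecidableEq 𝒳]
  [Fintype 𝒴] [DecidableEq 𝒴] {k n : ℕ}

/-- The distance on sequences induced by the joint-type-dependent distance `dd`. -/
def d (S : Setup 𝒱 𝒳 k n) (x x' : Fin n → 𝒳) : ℝ := S.dd (empDist2 x x')

/-- The set from which the codeword of the message `v` is drawn uniformly, given the
codewords `f w` of the messages `w` generated before `v`: all sequences in the type class
`T^n(Q_{μ(cls v)})` at distance greater than `max (Δ (cls v)) (Δ (cls w))` from every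
previously generated codeword `f w`.  (For `w` in the same class this is the
within-class constraint `d > Δ_i`; for `w` in an earlier class `j` it is
`d > max (Δ_i, Δ_j)`.) -/
def admissible (S : Setup 𝒱 𝒳 k n) (f : (Fin k → 𝒱) → Fin n → 𝒳) (v : Fin k → 𝒱) :
    Finset (Fin n → 𝒳) :=
  (typeClass n (S.Q (S.μ (S.cls v)))).filter fun z =>
    ∀ w, S.ord w < S.ord v → max (S.Δ (S.cls v)) (S.Δ (S.cls w)) < S.d (f w) z

/-- The probability that the sequential RGV construction produces exactly the
codebook `f` : at each step the codeword is drawn uniformly from the admissible set. -/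
def prob (S : Setup 𝒱 𝒳 k n) (f : (Fin k → 𝒱) → Fin n → 𝒳) : ℝ :=
  ∏ v, if f v ∈ S.admissible f v then ((S.admissible f v).card : ℝ)⁻¹ else 0

/-- Probability of an event under the random RGV codebook. -/
def probEvent (S : Setup 𝒱 𝒳 k n) (E : ((Fin k → 𝒱) → Fin n → 𝒳) → Prop) : ℝ :=
  ∑ f, if E f then S.prob f else 0

/-- `ζ_n = N_k (n+1)^{|𝒳|² + |𝒳|}`. -/
def zeta (S : Setup 𝒱 𝒳 k n) : ℝ :=
  (S.Nk : ℝ) * (n + 1 : ℝ) ^ (Fintype.card 𝒳 ^ 2 + Fintype.card 𝒳)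

/-- The discard condition: for each codeword type class `T^n(Q_c)`, the number of
sequences violating the distance constraints is at most `ζ_n |T^n(Q_c)| e^{-nδ}`. -/
def DiscardCond (S : Setup 𝒱 𝒳 k n) (δ : ℝ) : Prop :=
  ∀ c : Fin S.m, ∀ xt : Fin S.Nk → Fin n → 𝒳,
    (∀ j, xt j ∈ typeClass n (S.Q (S.μ j))) →
    ∑ j : Fin S.Nk,
        (((typeClass n (S.Q c)).filter fun z => S.d z (xt j) ≤ S.Δ j).card : ℝ) *
          ((typeClass k (S.srcType j)).card : ℝ)
      ≤ S.zeta * ((typeClass n (S.Q c)).card : ℝ) * Real.exp (-(n : ℝ) * δ)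

/-- The constraint set `Γ_ij` of Theorem 1. -/
def Gamma (S : Setup 𝒱 𝒳 k n) (q : Fin S.Nk → (𝒳 × 𝒴 → ℝ) → ℝ) (i j : Fin S.Nk) :
    Set (𝒳 × 𝒳 × 𝒴 → ℝ) :=
  {P | IsProbDist P ∧ margX P = S.Q (S.μ i) ∧ margXbar P = S.Q (S.μ j) ∧
    max (S.Δ i) (S.Δ j) ≤ S.dd (margXXbar P) ∧ q i (margXY P) ≤ q j (margXbarY P)}

/-- `exp(-n E_rgv^{(ij)}(P_V, W))`, where
`E_rgv^{(ij)} = t e(R_i/t, P_V) + min_{P ∈ Γ_ij} { D(P_XY ‖ Q_{μ(i)} × W) +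
|I_P(X̄; X,Y) − R_j|⁺ }` and `R_i = t H(P_i)`; when `Γ_ij = ∅` the minimum is `+∞`
and the term is `0`. -/
def ErgvTerm (S : Setup 𝒱 𝒳 k n) (t : ℝ) (PV : 𝒱 → ℝ) (W : 𝒳 → 𝒴 → ℝ)
    (q : Fin S.Nk → (𝒳 × 𝒴 → ℝ) → ℝ) (i j : Fin S.Nk) : ℝ :=
  if (S.Gamma q i j).Nonempty then
    Real.exp (-(n : ℝ) * (t * srcRel (t * entropy (S.srcType i) / t) PV +
      sInf ((fun P => klDiv (margXY P) (fun r => S.Q (S.μ i) r.1 * W r.1 r.2) +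
        max (miXbarXY P - t * entropy (S.srcType j)) 0) '' S.Gamma q i j)))
  else 0

/-- The ensemble average error probability: the expectation over the random codebook of
the probability (over the source message and channel output) that the decoder `dec`
does not output the transmitted message. -/
def avgErr (S : Setup 𝒱 𝒳 k n) (PV : 𝒱 → ℝ) (W : 𝒳 → 𝒴 → ℝ)
    (dec : ((Fin k → 𝒱) → Fin n → 𝒳) → (Fin n → 𝒴) → Fin k → 𝒱) : ℝ :=
  ∑ f : (Fin k → 𝒱) → Fin n → 𝒳, S.prob f *
    ∑ v : Fin k → 𝒱, (∏ l, PV (v l)) *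
      ∑ y : Fin n → 𝒴, (∏ l, W (f v l) (y l)) * (if dec f y = v then 0 else 1)

end Setup

lemma sub_le_mul_log_div (a b : ℝ) (ha : 0 ≤ a) (hb : 0 ≤ b) (h : a ≠ 0 → b ≠ 0) :
    a - b ≤ a * Real.log (a / b) := by
  rcases eq_or_lt_of_le ha with h0 | h0
  · simp [← h0]; linarith
  · have hb' : 0 < b := (h h0.ne').lt_of_le' hb
    have hlog : Real.log (b / a) ≤ b / a - 1 := Real.log_le_sub_one_of_pos (div_pos hb' h0)
    have h1 : a * Real.log (b / a) ≤ a * (b / a - 1) := mul_le_mul_of_nonneg_left hlog h0.le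
    have h2 : a * (b / a - 1) = b - a := by field_simp
    have h3 : Real.log (a / b) = -Real.log (b / a) := by
      rw [← Real.log_inv]; congr 1; rw [inv_div]
    rw [h3]; linarith

lemma neg_le_mul_log_div (a b : ℝ) (ha : 0 ≤ a) (hb : 0 ≤ b) :
    -b ≤ a * Real.log (a / b) := by
  by_cases hb0 : b = 0
  · simp [hb0]
  · have := sub_le_mul_log_div a b ha hb (fun _ => hb0)
    linarith

/-- Data processing: `I(X̄;Y) ≤ I(X̄;(X,Y))`. -/
lemma mutualInfo_margXbarY_le_miXbarXY {α β γ : Type*} [Fintype α] [Fintype β] [Fintype γ]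
    (P : α × β × γ → ℝ) (hP : IsProbDist P) :
    mutualInfo (margXbarY P) ≤ miXbarXY P := by
  obtain ⟨hnn, hsum⟩ := hP
  set PY : γ → ℝ := fun c => ∑ a, ∑ b, P (a, b, c) with hPYdef
  have hm1 : ∀ b c, 0 ≤ margXbarY P (b, c) := fun b c => Finset.sum_nonneg fun a _ => hnn _
  have hm2 : ∀ a c, 0 ≤ margXY P (a, c) := fun a c => Finset.sum_nonneg fun b _ => hnn _
  have hm3 : ∀ b, 0 ≤ margXbar P b := fun b =>
    Finset.sum_nonneg fun a _ => Finset.sum_nonneg fun c _ => hnn _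
  have hPYnn : ∀ c, 0 ≤ PY c := fun c =>
    Finset.sum_nonneg fun a _ => Finset.sum_nonneg fun b _ => hnn _
  have hle1 : ∀ a b c, P (a, b, c) ≤ margXbarY P (b, c) := fun a b c =>
    Finset.single_le_sum (f := fun a => P (a, b, c)) (fun a _ => hnn _) (Finset.mem_univ a)
  have hle2 : ∀ a b c, P (a, b, c) ≤ margXY P (a, c) := fun a b c =>
    Finset.single_le_sum (f := fun b => P (a, b, c)) (fun b _ => hnn _) (Finset.mem_univ b)
  have hle3 : ∀ a b c, P (a, b, c) ≤ margXbar P b := fun a b c => by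
    have h1 : P (a, b, c) ≤ ∑ c', P (a, b, c') :=
      Finset.single_le_sum (f := fun c' => P (a, b, c')) (fun c' _ => hnn _) (Finset.mem_univ c)
    have h2 : (∑ c', P (a, b, c')) ≤ ∑ a', ∑ c', P (a', b, c') :=
      Finset.single_le_sum (f := fun a' => ∑ c', P (a', b, c'))
        (fun a' _ => Finset.sum_nonneg fun c' _ => hnn _) (Finset.mem_univ a)
    exact h1.trans h2
  have hle2Y : ∀ a c, margXY P (a, c) ≤ PY c := fun a c =>
    Finset.single_le_sum (f := fun a => ∑ b, P (a, b, c))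
      (fun a _ => Finset.sum_nonneg fun b _ => hnn _) (Finset.mem_univ a)
  -- triple-sum forms of the two mutual informations
  have claim1 : miXbarXY P = ∑ a, ∑ b, ∑ c,
      P (a, b, c) * Real.log (P (a, b, c) / (margXbar P b * margXY P (a, c))) := by
    unfold miXbarXY mutualInfo
    rw [Fintype.sum_prod_type]
    have step : ∀ b : β, (∑ r : α × γ,
        P (r.1, b, r.2) * Real.log (P (r.1, b, r.2) /
          (fstMarg (fun q : β × α × γ => P (q.2.1, q.1, q.2.2)) b *
           sndMarg (fun q : β × α × γ => P (q.2.1, q.1, q.2.2)) r))) =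
        ∑ a, ∑ c, P (a, b, c) * Real.log (P (a, b, c) / (margXbar P b * margXY P (a, c))) := by
      intro b
      have hfst : fstMarg (fun q : β × α × γ => P (q.2.1, q.1, q.2.2)) b = margXbar P b := by
        simp only [fstMarg, margXbar]
        rw [Fintype.sum_prod_type]
      rw [Fintype.sum_prod_type]
      refine Finset.sum_congr rfl fun a _ => Finset.sum_congr rfl fun c _ => ?_
      rw [hfst]
      rfl
    rw [Finset.sum_congr rfl fun b _ => step b]
    exact Finset.sum_comm
  have hfstM : ∀ b, fstMarg (margXbarY P) b = margXbar P b := by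
    intro b
    simp only [fstMarg, margXbarY, margXbar]
    exact Finset.sum_comm
  have hsndM : ∀ c, sndMarg (margXbarY P) c = PY c := by
    intro c
    simp only [sndMarg, margXbarY, hPYdef]
    exact Finset.sum_comm
  have claim2 : mutualInfo (margXbarY P) = ∑ a, ∑ b, ∑ c,
      P (a, b, c) * Real.log (margXbarY P (b, c) / (margXbar P b * PY c)) := by
    unfold mutualInfo
    rw [Fintype.sum_prod_type]
    have step : ∀ b : β, (∑ c, margXbarY P (b, c) *
        Real.log (margXbarY P (b, c) / (fstMarg (margXbarY P) b * sndMarg (margXbarY P) c))) =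
        ∑ c, ∑ a, P (a, b, c) * Real.log (margXbarY P (b, c) / (margXbar P b * PY c)) := by
      intro b
      refine Finset.sum_congr rfl fun c _ => ?_
      rw [hfstM, hsndM]
      show (∑ a, P (a, b, c)) * _ = _
      rw [Finset.sum_mul]
    rw [Finset.sum_congr rfl fun b _ => step b]
    trans ∑ b : β, ∑ a : α, ∑ c : γ,
      P (a, b, c) * Real.log (margXbarY P (b, c) / (margXbar P b * PY c))
    · exact Finset.sum_congr rfl fun b _ => Finset.sum_comm
    · exact Finset.sum_comm
  -- the correction term
  set Qf : α → β → γ → ℝ := fun a b c => margXY P (a, c) * margXbarY P (b, c) / PY c with hQf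
  have hQnn : ∀ a b c, 0 ≤ Qf a b c := fun a b c =>
    div_nonneg (mul_nonneg (hm2 a c) (hm1 b c)) (hPYnn c)
  have claim3 : ∀ a b c,
      P (a, b, c) * Real.log (margXbarY P (b, c) / (margXbar P b * PY c)) +
        (P (a, b, c) - Qf a b c) ≤
      P (a, b, c) * Real.log (P (a, b, c) / (margXbar P b * margXY P (a, c))) := by
    intro a b c
    by_cases hp : P (a, b, c) = 0
    · have := hQnn a b c
      simp only [hp, zero_mul, zero_add, zero_sub]
      linarith
    · have hp' : 0 < P (a, b, c) := (hnn _).lt_of_ne' hp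
      have h1 : 0 < margXbarY P (b, c) := hp'.trans_le (hle1 a b c)
      have h2 : 0 < margXY P (a, c) := hp'.trans_le (hle2 a b c)
      have h3 : 0 < margXbar P b := hp'.trans_le (hle3 a b c)
      have hY : 0 < PY c := h2.trans_le (hle2Y a c)
      have hq' : 0 < Qf a b c := div_pos (mul_pos h2 h1) hY
      have key : P (a, b, c) - Qf a b c ≤ P (a, b, c) * Real.log (P (a, b, c) / Qf a b c) :=
        sub_le_mul_log_div _ _ hp'.le hq'.le (fun _ => hq'.ne')
      have ekey : Real.log (P (a, b, c) / (margXbar P b * margXY P (a, c))) -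
          Real.log (margXbarY P (b, c) / (margXbar P b * PY c)) =
          Real.log (P (a, b, c) / Qf a b c) := by
        rw [Real.log_div hp (by positivity), Real.log_div h1.ne' (by positivity),
          Real.log_div hp'.ne' hq'.ne', Real.log_mul h3.ne' h2.ne',
          Real.log_mul h3.ne' hY.ne', hQf]
        simp only
        rw [Real.log_div (by positivity) hY.ne', Real.log_mul h2.ne' h1.ne']
        ring
      nlinarith [key, ekey, mul_le_mul_of_nonneg_left (le_of_eq ekey) hp'.le]
  -- total masses
  have hsumP : (∑ a, ∑ b, ∑ c, P (a, b, c)) = 1 := by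
    rw [← hsum, Fintype.sum_prod_type]
    exact Finset.sum_congr rfl fun a _ =>
      (Fintype.sum_prod_type (fun y : β × γ => P (a, y.1, y.2))).symm
  have hPYsum : (∑ c, PY c) = 1 := by
    rw [← hsumP]
    simp only [hPYdef]
    trans ∑ a : α, ∑ c : γ, ∑ b : β, P (a, b, c)
    · exact Finset.sum_comm
    · exact Finset.sum_congr rfl fun a _ => Finset.sum_comm
  have hsumQ : (∑ a, ∑ b, ∑ c, Qf a b c) = 1 := by
    have reorder : (∑ a, ∑ b, ∑ c, Qf a b c) = ∑ c, ∑ a, ∑ b, Qf a b c := by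
      trans ∑ a : α, ∑ c : γ, ∑ b : β, Qf a b c
      · exact Finset.sum_congr rfl fun a _ => Finset.sum_comm
      · exact Finset.sum_comm
    rw [reorder, ← hPYsum]
    refine Finset.sum_congr rfl fun c _ => ?_
    by_cases hc : PY c = 0
    · have hz : ∀ a, margXY P (a, c) = 0 := fun a =>
        le_antisymm (hc ▸ hle2Y a c) (hm2 a c)
      simp only [hQf]
      simp [hz, hc]
    · have hb1 : (∑ b, margXbarY P (b, c)) = PY c := by
        simp only [margXbarY, hPYdef]
        exact Finset.sum_comm
      have ha1 : (∑ a, margXY P (a, c)) = PY c := rfl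
      calc (∑ a, ∑ b, Qf a b c)
          = ∑ a, margXY P (a, c) * (∑ b, margXbarY P (b, c)) / PY c := by
            refine Finset.sum_congr rfl fun a _ => ?_
            rw [Finset.mul_sum, Finset.sum_div]
        _ = ∑ a, margXY P (a, c) := by
            refine Finset.sum_congr rfl fun a _ => ?_
            rw [hb1, mul_div_assoc, div_self hc, mul_one]
        _ = PY c := ha1
  -- conclude
  rw [claim1, claim2]
  have hfinal : (∑ a, ∑ b, ∑ c,
      (P (a, b, c) * Real.log (margXbarY P (b, c) / (margXbar P b * PY c)) +
        (P (a, b, c) - Qf a b c))) ≤ ∑ a, ∑ b, ∑ c,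
      P (a, b, c) * Real.log (P (a, b, c) / (margXbar P b * margXY P (a, c))) :=
    Finset.sum_le_sum fun a _ => Finset.sum_le_sum fun b _ => Finset.sum_le_sum fun c _ =>
      claim3 a b c
  have hsplit : (∑ a, ∑ b, ∑ c,
      (P (a, b, c) * Real.log (margXbarY P (b, c) / (margXbar P b * PY c)) +
        (P (a, b, c) - Qf a b c))) =
      (∑ a, ∑ b, ∑ c, P (a, b, c) * Real.log (margXbarY P (b, c) / (margXbar P b * PY c))) +
        ((∑ a, ∑ b, ∑ c, P (a, b, c)) - (∑ a, ∑ b, ∑ c, Qf a b c)) := by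
    simp [Finset.sum_add_distrib, Finset.sum_sub_distrib]
  rw [hsplit, hsumP, hsumQ] at hfinal
  linarith

/-- With the generalized maximum mutual information metric
`q(i, P) = I(P) − R_i`, `R_i = t H(P_i)`, every `P ∈ Γ_ij` (membership spelled out as
hypotheses) satisfies `D(P_XY ‖ Q_{μ(i)} × W) + |I_P(X̄; X,Y) − R_j|⁺ ≥ E_r(Q_{μ(i)}, R_i)`,
i.e. `min_{P ∈ Γ_ij} {...} ≥ E_r(Q_{μ(i)}, R_i)` (the minimum over an empty set being
`+∞`); consequently `E_rgv^{(ij)}(P_V, W) ≥ t e(R_i/t, P_V) + E_r(Q_{μ(i)}, R_i)`. -/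
theorem statement_9 {𝒱 𝒳 𝒴 : Type*} [Fintype 𝒱] [Fintype 𝒳] [Fintype 𝒴]
    (t : ℝ) (PV : 𝒱 → ℝ) (hPV : IsProbDist PV)
    (W : 𝒳 → 𝒴 → ℝ) (hW : ∀ x, IsProbDist (W x))
    (Pti Ptj : 𝒱 → ℝ) (Qi Qj : 𝒳 → ℝ)
    (dd : (𝒳 × 𝒳 → ℝ) → ℝ) (hdd : ∀ p : 𝒳 × 𝒳 → ℝ, dd (fun r => p (r.2, r.1)) = dd p)
    (Δi Δj : ℝ)
    (P : 𝒳 × 𝒳 × 𝒴 → ℝ) (hP : IsProbDist P)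
    (hPX : margX P = Qi) (hPXbar : margXbar P = Qj)
    (hd : max Δi Δj ≤ dd (margXXbar P))
    (hq : mutualInfo (margXY P) - t * entropy Pti ≤
      mutualInfo (margXbarY P) - t * entropy Ptj) :
    Er W Qi (t * entropy Pti) ≤
      klDiv (margXY P) (fun r => Qi r.1 * W r.1 r.2) +
        max (miXbarXY P - t * entropy Ptj) 0 ∧
    t * srcRel (t * entropy Pti / t) PV + Er W Qi (t * entropy Pti) ≤
      t * srcRel (t * entropy Pti / t) PV +
        (klDiv (margXY P) (fun r => Qi r.1 * W r.1 r.2) +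
          max (miXbarXY P - t * entropy Ptj) 0) := by
  obtain ⟨hnn, hsum⟩ := hP
  have hQinn : ∀ x, 0 ≤ Qi x := by
    intro x; rw [← hPX]
    exact Finset.sum_nonneg fun b _ => Finset.sum_nonneg fun c _ => hnn _
  have e2 : ∑ s : 𝒳 × 𝒳 × 𝒴, P s = ∑ a : 𝒳, ∑ b : 𝒳, ∑ c : 𝒴, P (a, b, c) := by
    rw [Fintype.sum_prod_type]
    exact Finset.sum_congr rfl fun a _ => Fintype.sum_prod_type _
  have hQisum : ∑ x, Qi x = 1 := by
    rw [← hsum, e2, ← hPX]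
    rfl
  have hQWsum : ∑ r : 𝒳 × 𝒴, Qi r.1 * W r.1 r.2 = 1 := by
    have e1 : ∑ r : 𝒳 × 𝒴, Qi r.1 * W r.1 r.2 = ∑ x : 𝒳, ∑ y : 𝒴, Qi x * W x y :=
      Fintype.sum_prod_type _
    rw [e1, ← hQisum]
    refine Finset.sum_congr rfl fun x _ => ?_
    rw [← Finset.mul_sum, (hW x).2, mul_one]
  -- lower bound of the Er feasible set
  have hbdd : ∀ z ∈ {z | ∃ P' : 𝒳 × 𝒴 → ℝ, IsProbDist P' ∧ fstMarg P' = Qi ∧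
      z = klDiv P' (fun r => Qi r.1 * W r.1 r.2) + max (mutualInfo P' - t * entropy Pti) 0},
      (-1 : ℝ) ≤ z := by
    rintro z ⟨P', ⟨hP'nn, hP'sum⟩, hfst, rfl⟩
    have h1 : ∀ r : 𝒳 × 𝒴, -(Qi r.1 * W r.1 r.2) ≤
        P' r * Real.log (P' r / (Qi r.1 * W r.1 r.2)) := fun r =>
      neg_le_mul_log_div _ _ (hP'nn r) (mul_nonneg (hQinn _) ((hW _).1 _))
    have h2 : ∑ r : 𝒳 × 𝒴, -(Qi r.1 * W r.1 r.2) ≤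
        klDiv P' (fun r => Qi r.1 * W r.1 r.2) :=
      Finset.sum_le_sum fun r _ => h1 r
    have h3 : ∑ r : 𝒳 × 𝒴, -(Qi r.1 * W r.1 r.2) = -1 := by
      rw [← hQWsum]; simp
    have h4 : (0 : ℝ) ≤ max (mutualInfo P' - t * entropy Pti) 0 := le_max_right _ _
    linarith
  -- margXY P is feasible
  have hmXYnn : ∀ r : 𝒳 × 𝒴, 0 ≤ margXY P r := fun r => Finset.sum_nonneg fun b _ => hnn _
  have hmXYsum : ∑ r : 𝒳 × 𝒴, margXY P r = 1 := by
    have e1 : ∑ r : 𝒳 × 𝒴, margXY P r = ∑ a : 𝒳, ∑ c : 𝒴, ∑ b : 𝒳, P (a, b, c) :=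
      Fintype.sum_prod_type _
    rw [e1, ← hsum, e2]
    exact Finset.sum_congr rfl fun a _ => Finset.sum_comm
  have hfstXY : fstMarg (margXY P) = Qi := by
    funext a; rw [← hPX]
    show (∑ c : 𝒴, ∑ b : 𝒳, P (a, b, c)) = ∑ b : 𝒳, ∑ c : 𝒴, P (a, b, c)
    exact Finset.sum_comm
  have hEr : Er W Qi (t * entropy Pti) ≤
      klDiv (margXY P) (fun r => Qi r.1 * W r.1 r.2) +
        max (mutualInfo (margXY P) - t * entropy Pti) 0 :=
    csInf_le ⟨-1, fun z hz => hbdd z hz⟩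
      ⟨margXY P, ⟨hmXYnn, hmXYsum⟩, hfstXY, rfl⟩
  have hmi : mutualInfo (margXbarY P) ≤ miXbarXY P :=
    mutualInfo_margXbarY_le_miXbarXY P ⟨hnn, hsum⟩
  have hmax : max (mutualInfo (margXY P) - t * entropy Pti) 0 ≤
      max (miXbarXY P - t * entropy Ptj) 0 :=
    max_le_max (by linarith) le_rfl
  constructor
  · linarith
  · linarith
end RGV
end
end

section
/- Let Q, Q′ be types of 𝒳^n, x ∈ T^n(Q), y ∈ 𝒴^n, Δ ∈ ℝ, a ∈ ℝ, let d be a symmetric joint-type-dependent distance and q(j, ·) a real-valued function of joint distributions on 𝒳×𝒴. Then (1/|T^n(Q′)|) · |{ x̄ ∈ T^n(Q′) : d(P̂_{xx̄}) > Δ and q(j, P̂_{x̄y}) ≥ a }| ≤ (n+1)^{|𝒳|²|𝒴| + |𝒳|} · max_V exp( −n I_V(X̄; X, Y) ), where the maximum is over joint types V of triples in 𝒳^n × 𝒳^n × 𝒴^n satisfying V_{XY} = P̂_{xy}, V_{X̄} = Q′, d(V_{XX̄}) > Δ, and q(j, V_{X̄Y}) ≥ a (the maximum being 0 if no such V exists).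 -/
open scoped BigOperators Classical

noncomputable section

namespace RGV

variable {α β γ : Type*}

section Statement12Aux
open Finset



/-- count of occurrences of `a` in the tuple `f`. -/
def cnt {α : Type*} [DecidableEq α] {n : ℕ} (f : Fin n → α) (a : α) : ℕ :=
  (Finset.univ.filter fun i => f i = a).card

variable {α β : Type*} [DecidableEq α] [DecidableEq β] {n : ℕ}

lemma cnt_le (f : Fin n → α) (a : α) : cnt f a ≤ n := by
  simpa [cnt] using (Finset.card_filter_le Finset.univ fun i => f i = a).trans (by simp)

lemma sum_cnt [Fintype α] (f : Fin n → α) : ∑ a, cnt f a = n := by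
  classical
  have := Finset.card_eq_sum_card_fiberwise (f := f) (s := Finset.univ) (t := Finset.univ)
    (fun i _ => Finset.mem_univ _)
  simpa [cnt] using this.symm

lemma cnt_congr {f : Fin n → α} {g : Fin n → β} {a : α} {b : β}
    (h : ∀ i, f i = a ↔ g i = b) : cnt f a = cnt g b := by
  unfold cnt; congr 1; exact Finset.filter_congr fun i _ => by rw [h i]

/-- marginalization of counts of a pair over the second coordinate. -/
lemma cnt_pair_sum [Fintype β] (f : Fin n → α) (g : Fin n → β) (a : α) :
    ∑ b, cnt (fun i => (f i, g i)) (a, b) = cnt f a := by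
  classical
  have h := Finset.card_eq_sum_card_fiberwise (f := g)
    (s := Finset.univ.filter fun i => f i = a) (t := Finset.univ) (fun i _ => Finset.mem_univ _)
  rw [cnt, h]
  refine Finset.sum_congr rfl fun b _ => ?_
  rw [Finset.filter_filter, cnt]
  congr 1
  exact Finset.filter_congr fun i _ => by simp [Prod.ext_iff]

/-- regrouping a product over positions by values. -/
lemma prod_comp_cnt [Fintype α] {M : Type*} [CommMonoid M] (f : Fin n → α) (h : α → M) :
    ∏ i, h (f i) = ∏ a, h a ^ cnt f a := by
  classical
  have := Finset.prod_fiberwise_of_maps_to' (g := f) (s := Finset.univ) (t := Finset.univ)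
    (fun i _ => Finset.mem_univ _) h
  rw [← this]
  exact Finset.prod_congr rfl fun a _ => by rw [Finset.prod_const, cnt]

lemma fact_aux1 (c d : ℕ) : Nat.factorial (c+d) ≤ (c + d) ^ d * Nat.factorial c := by
  induction d with
  | zero => simp
  | succ d ih =>
      have h1 : Nat.factorial (c+(d+1)) = (c + d + 1) * Nat.factorial (c+d) := by
        rw [← Nat.add_assoc]; exact Nat.factorial_succ _
      rw [h1]
      calc (c + d + 1) * Nat.factorial (c+d) ≤ (c + d + 1) * ((c + d) ^ d * Nat.factorial c) :=
            Nat.mul_le_mul_left _ ih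
        _ ≤ (c + d + 1) * ((c + d + 1) ^ d * Nat.factorial c) := by
            exact Nat.mul_le_mul_left _ (Nat.mul_le_mul_right _ (Nat.pow_le_pow_left (by omega) _))
        _ = (c + (d+1)) ^ (d+1) * Nat.factorial c := by ring_nf
  
lemma fact_aux2 (k d : ℕ) : k ^ d * Nat.factorial k ≤ Nat.factorial (k+d) := by
  induction d with
  | zero => simp
  | succ d ih =>
      have h1 : Nat.factorial (k+(d+1)) = (k+d+1) * Nat.factorial (k+d) := by
        rw [← Nat.add_assoc]; exact Nat.factorial_succ _
      rw [h1]
      calc k ^ (d+1) * Nat.factorial k = k * (k ^ d * Nat.factorial k) := by ring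
        _ ≤ k * Nat.factorial (k+d) := Nat.mul_le_mul_left _ ih
        _ ≤ (k+d+1) * Nat.factorial (k+d) := Nat.mul_le_mul_right _ (by omega)

lemma fact_pow_le (k c : ℕ) : k ^ c * Nat.factorial k ≤ k ^ k * Nat.factorial c := by
  rcases le_total c k with h | h
  · have := fact_aux1 c (k - c)
    have hk : c + (k - c) = k := by omega
    rw [hk] at this
    calc k ^ c * Nat.factorial k ≤ k ^ c * (k ^ (k - c) * Nat.factorial c) := Nat.mul_le_mul_left _ this
      _ = k ^ k * Nat.factorial c := by rw [← Nat.mul_assoc, ← pow_add, Nat.add_sub_cancel' h]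
  · have := fact_aux2 k (c - k)
    have hk : k + (c - k) = c := by omega
    rw [hk] at this
    calc k ^ c * Nat.factorial k = k ^ k * (k ^ (c - k) * Nat.factorial k) := by
          rw [← Nat.mul_assoc, ← pow_add, Nat.add_sub_cancel' h]
      _ ≤ k ^ k * Nat.factorial c := Nat.mul_le_mul_left _ this



section PermCount
variable {𝒳 : Type*} [Fintype 𝒳] [DecidableEq 𝒳] {n : ℕ}


/-- gluing a family of fiber permutations into a permutation -/
def glue (g : Fin n → 𝒳) (fam : ∀ b : 𝒳, Equiv.Perm {i // g i = b}) : Equiv.Perm (Fin n) :=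
  (Equiv.sigmaFiberEquiv g).symm.trans ((Equiv.sigmaCongrRight fam).trans (Equiv.sigmaFiberEquiv g))

lemma glue_apply (g : Fin n → 𝒳) (fam : ∀ b : 𝒳, Equiv.Perm {i // g i = b}) (i : Fin n) :
    glue g fam i = (fam (g i) ⟨i, rfl⟩ : {j // g j = g i}).val := rfl

lemma comp_glue (g : Fin n → 𝒳) (fam : ∀ b, Equiv.Perm {i // g i = b}) :
    g ∘ glue g fam = g := by
  funext i
  have := (fam (g i) ⟨i, rfl⟩).2
  simpa [glue_apply] using this

lemma card_stab (g : Fin n → 𝒳) :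
    (Finset.univ.filter fun σ : Equiv.Perm (Fin n) => g ∘ σ = g).card
      = ∏ b, Nat.factorial (cnt g b) := by
  classical
  have key : (Finset.univ : Finset (∀ b : 𝒳, Equiv.Perm {i // g i = b})).card
      = (Finset.univ.filter fun σ : Equiv.Perm (Fin n) => g ∘ σ = g).card := by
    refine Finset.card_bij' (fun fam _ => glue g fam)
      (fun σ hσ => fun b => Equiv.Perm.subtypePerm σ ?_) ?_ ?_ ?_ ?_
    · intro i
      have hσ' : g ∘ σ = g := (Finset.mem_filter.mp hσ).2
      have hgi : g (σ i) = g i := congrFun hσ' i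
      rw [hgi]
    · intro fam _
      exact Finset.mem_filter.mpr ⟨Finset.mem_univ _, comp_glue g fam⟩
    · intro σ hσ; exact Finset.mem_univ _
    · intro fam _
      funext b
      ext ⟨j, hj⟩
      subst hj
      simp [Equiv.Perm.subtypePerm_apply, glue_apply]
    · intro σ hσ
      ext i
      simp [glue_apply, Equiv.Perm.subtypePerm_apply]
  rw [← key]
  simp only [Finset.card_univ, Fintype.card_pi, Fintype.card_perm]
  refine Finset.prod_congr rfl fun b _ => ?_
  rw [Fintype.card_subtype]
  rfl

lemma exists_perm_of_cnt_eq {f g : Fin n → 𝒳} (h : ∀ b, cnt f b = cnt g b) :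
    ∃ σ : Equiv.Perm (Fin n), g ∘ σ = f := by
  classical
  have e : ∀ b : 𝒳, {i // f i = b} ≃ {i // g i = b} := fun b =>
    Fintype.equivOfCardEq (by rw [Fintype.card_subtype, Fintype.card_subtype]; exact h b)
  refine ⟨(Equiv.sigmaFiberEquiv f).symm.trans
    ((Equiv.sigmaCongrRight e).trans (Equiv.sigmaFiberEquiv g)), ?_⟩
  funext i
  exact (e (f i) ⟨i, rfl⟩).2

lemma card_cntfiber_mul_factorial (g : Fin n → 𝒳) :
    (Finset.univ.filter fun f : Fin n → 𝒳 => ∀ b, cnt f b = cnt g b).card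
        * ∏ b, Nat.factorial (cnt g b) = Nat.factorial n := by
  classical
  have h0 : Nat.factorial n = (Finset.univ : Finset (Equiv.Perm (Fin n))).card := by
    rw [Finset.card_univ, Fintype.card_perm, Fintype.card_fin]
  have hmaps : ∀ σ : Equiv.Perm (Fin n), ∀ b, cnt (g ∘ σ) b = cnt g b := by
    intro σ b
    unfold cnt
    refine Finset.card_bij (fun i _ => σ i) (fun i hi => ?_) (fun i hi j hj hij => σ.injective hij)
      (fun j hj => ⟨σ.symm j, ?_, by simp⟩)
    · simpa using (Finset.mem_filter.mp hi).2
    · simp only [Finset.mem_filter, Finset.mem_univ, true_and] at hj ⊢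
      simpa using hj
  have h1 := Finset.card_eq_sum_card_fiberwise
    (f := fun σ : Equiv.Perm (Fin n) => g ∘ σ)
    (s := Finset.univ)
    (t := Finset.univ.filter fun f : Fin n → 𝒳 => ∀ b, cnt f b = cnt g b)
    (fun σ _ => Finset.mem_filter.mpr ⟨Finset.mem_univ _, hmaps σ⟩)
  have h2 : ∀ f ∈ (Finset.univ.filter fun f : Fin n → 𝒳 => ∀ b, cnt f b = cnt g b),
      (Finset.univ.filter fun σ : Equiv.Perm (Fin n) => g ∘ σ = f).card
        = ∏ b, Nat.factorial (cnt g b) := by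
    intro f hf
    obtain ⟨σ₀, hσ₀⟩ := exists_perm_of_cnt_eq (Finset.mem_filter.mp hf).2
    rw [← card_stab g]
    refine Finset.card_nbij' (fun σ => σ * σ₀⁻¹) (fun σ => σ * σ₀) ?_ ?_ ?_ ?_
    · intro σ hσ
      simp only [Finset.mem_coe, Finset.mem_filter, Finset.mem_univ, true_and] at hσ ⊢
      funext i
      simp only [Function.comp, Equiv.Perm.mul_apply]
      have h1 : g (σ (σ₀⁻¹ i)) = f (σ₀⁻¹ i) := congrFun hσ (σ₀⁻¹ i)
      have h2 : g (σ₀ (σ₀⁻¹ i)) = f (σ₀⁻¹ i) := congrFun hσ₀ (σ₀⁻¹ i)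
      rw [h1, ← h2]
      simp
    · intro σ hσ
      simp only [Finset.mem_coe, Finset.mem_filter, Finset.mem_univ, true_and] at hσ ⊢
      funext i
      simp only [Function.comp, Equiv.Perm.mul_apply]
      have h1 : g (σ (σ₀ i)) = g (σ₀ i) := congrFun hσ (σ₀ i)
      rw [h1]
      exact congrFun hσ₀ i
    · intro σ _; simp [mul_assoc]
    · intro σ _; simp [mul_assoc]
  rw [h0, h1, Finset.sum_congr rfl h2, Finset.sum_const, smul_eq_mul, Nat.mul_comm]


lemma prod_pow_div (hn : 0 < n) (k c : 𝒳 → ℕ) (hc : ∑ b, c b = n) :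
    ∏ b, ((k b : ℝ) / n) ^ c b = (∏ b, (k b : ℝ) ^ c b) / (n : ℝ) ^ n := by
  rw [← hc]
  rw [← Finset.prod_pow_eq_pow_sum, ← Finset.prod_div_distrib]
  exact Finset.prod_congr rfl fun b _ => by rw [div_pow]

lemma typeclass_lower (hn : 0 < n) (g : Fin n → 𝒳) :
    ∏ b, ((n : ℝ) / cnt g b) ^ cnt g b
      ≤ (n + 1 : ℝ) ^ (Fintype.card 𝒳) *
        ((Finset.univ.filter fun f : Fin n → 𝒳 => ∀ b, cnt f b = cnt g b).card : ℝ) := by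
  classical
  set k : 𝒳 → ℕ := fun b => cnt g b with hk
  set Q' : 𝒳 → ℝ := fun b => (k b : ℝ) / n with hQ'
  set F := Finset.univ.filter fun f : Fin n → 𝒳 => ∀ b, cnt f b = cnt g b with hF
  have hnR : (0 : ℝ) < n := by exact_mod_cast hn
  -- step 1 : 1 = sum over all sequences
  have h2 : (1 : ℝ) = ∑ f : Fin n → 𝒳, ∏ b, Q' b ^ cnt f b := by
    have hsum : ∑ b, Q' b = 1 := by
      rw [hQ']
      rw [← Finset.sum_div]
      rw [show ∑ b, (k b : ℝ) = (n : ℝ) by exact_mod_cast congrArg Nat.cast (sum_cnt g)]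
      exact div_self (ne_of_gt hnR)
    calc (1 : ℝ) = ∏ _i : Fin n, ∑ b, Q' b := by rw [hsum]; simp
      _ = ∑ f ∈ Fintype.piFinset (fun _ : Fin n => (Finset.univ : Finset 𝒳)),
            ∏ i, Q' (f i) := Finset.prod_univ_sum _ _
      _ = ∑ f : Fin n → 𝒳, ∏ i, Q' (f i) := by rw [Fintype.piFinset_univ]
      _ = ∑ f : Fin n → 𝒳, ∏ b, Q' b ^ cnt f b :=
          Finset.sum_congr rfl fun f _ => prod_comp_cnt f Q'
  -- step 2 : group by the count vector
  set key : (Fin n → 𝒳) → (𝒳 → Fin (n + 1)) :=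
    fun f b => ⟨cnt f b, Nat.lt_succ_of_le (cnt_le f b)⟩ with hkey
  have h3 : ∑ f : Fin n → 𝒳, ∏ b, Q' b ^ cnt f b
      = ∑ c : 𝒳 → Fin (n + 1), ∑ f ∈ Finset.univ.filter fun f => key f = c,
          ∏ b, Q' b ^ cnt f b := by
    rw [Finset.sum_fiberwise_of_maps_to (fun f _ => Finset.mem_univ (key f))]
  -- step 3 : each group is at most the central one
  have h4 : ∀ c : 𝒳 → Fin (n + 1),
      (∑ f ∈ Finset.univ.filter fun f => key f = c, ∏ b, Q' b ^ cnt f b)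
        ≤ (F.card : ℝ) * ∏ b, Q' b ^ k b := by
    intro c
    set Sc := Finset.univ.filter fun f => key f = c with hSc
    rcases Sc.eq_empty_or_nonempty with he | ⟨f₀, hf₀⟩
    · rw [he]
      simp only [Finset.sum_empty]
      positivity
    · have hcnt : ∀ b, cnt f₀ b = (c b : ℕ) := by
        intro b
        have := congrFun (Finset.mem_filter.mp hf₀).2 b
        exact congrArg Fin.val this
      have hSceq : Sc = Finset.univ.filter fun f : Fin n → 𝒳 => ∀ b, cnt f b = cnt f₀ b := by
        ext f
        simp only [hSc, Finset.mem_filter, Finset.mem_univ, true_and]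
        constructor
        · intro h b
          have := congrFun h b
          rw [hcnt b]
          exact congrArg Fin.val this
        · intro h
          funext b
          exact Fin.ext (by rw [hkey]; simp only; rw [h b, hcnt b])
      have hsum_c : ∑ b, cnt f₀ b = n := sum_cnt f₀
      have hnat : Sc.card * ∏ b, k b ^ cnt f₀ b ≤ F.card * ∏ b, k b ^ k b := by
        have e1 : Sc.card * ∏ b, Nat.factorial (cnt f₀ b) = Nat.factorial n := by
          rw [hSceq]; exact card_cntfiber_mul_factorial f₀
        have e2 : F.card * ∏ b, Nat.factorial (k b) = Nat.factorial n := by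
          rw [hF]; exact card_cntfiber_mul_factorial g
        have hP : 0 < (∏ b, Nat.factorial (cnt f₀ b)) * ∏ b, Nat.factorial (k b) :=
          Nat.mul_pos (Finset.prod_pos fun b _ => Nat.factorial_pos _)
            (Finset.prod_pos fun b _ => Nat.factorial_pos _)
        refine Nat.le_of_mul_le_mul_right ?_ hP
        have lhs_eq : Sc.card * (∏ b, k b ^ cnt f₀ b) *
            ((∏ b, Nat.factorial (cnt f₀ b)) * ∏ b, Nat.factorial (k b))
            = Nat.factorial n * ∏ b, (k b ^ cnt f₀ b * Nat.factorial (k b)) := by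
          rw [Finset.prod_mul_distrib, ← e1]; ring
        have rhs_eq : F.card * (∏ b, k b ^ k b) *
            ((∏ b, Nat.factorial (cnt f₀ b)) * ∏ b, Nat.factorial (k b))
            = Nat.factorial n * ∏ b, (k b ^ k b * Nat.factorial (cnt f₀ b)) := by
          rw [Finset.prod_mul_distrib, ← e2]; ring
        rw [lhs_eq, rhs_eq]
        exact Nat.mul_le_mul_left _ (Finset.prod_le_prod' fun b _ => fact_pow_le (k b) (cnt f₀ b))
      have hconst : ∀ f ∈ Sc, ∏ b, Q' b ^ cnt f b = ∏ b, Q' b ^ cnt f₀ b := by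
        intro f hf
        have hf' := (Finset.mem_filter.mp (hSceq ▸ hf)).2
        exact Finset.prod_congr rfl fun b _ => by rw [hf' b]
      rw [Finset.sum_congr rfl hconst, Finset.sum_const, nsmul_eq_mul]
      rw [prod_pow_div hn k (fun b => cnt f₀ b) hsum_c,
          prod_pow_div hn k k (sum_cnt g)]
      rw [← mul_div_assoc, ← mul_div_assoc]
      apply div_le_div_of_nonneg_right ?_ (by positivity)
      · exact_mod_cast hnat
  -- step 4 : combine
  have h5 : (1 : ℝ) ≤ (n + 1 : ℝ) ^ (Fintype.card 𝒳) * ((F.card : ℝ) * ∏ b, Q' b ^ k b) := by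
    calc (1 : ℝ)
        = ∑ f : Fin n → 𝒳, ∏ b, Q' b ^ cnt f b := h2
      _ = ∑ c : 𝒳 → Fin (n + 1), ∑ f ∈ Finset.univ.filter fun f => key f = c,
          ∏ b, Q' b ^ cnt f b := h3
      _ ≤ ∑ _c : 𝒳 → Fin (n + 1), (F.card : ℝ) * ∏ b, Q' b ^ k b :=
          Finset.sum_le_sum fun c _ => h4 c
      _ = (Fintype.card (𝒳 → Fin (n + 1)) : ℝ) * ((F.card : ℝ) * ∏ b, Q' b ^ k b) := by
          rw [Finset.sum_const, nsmul_eq_mul, Finset.card_univ]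
      _ = (n + 1 : ℝ) ^ (Fintype.card 𝒳) * ((F.card : ℝ) * ∏ b, Q' b ^ k b) := by
          rw [Fintype.card_fun, Fintype.card_fin]
          push_cast
          ring
  have hcancel : (∏ b, ((n : ℝ) / k b) ^ k b) * ∏ b, Q' b ^ k b = 1 := by
    rw [← Finset.prod_mul_distrib]
    rw [show (1:ℝ) = ∏ _b : 𝒳, (1:ℝ) by simp]
    refine Finset.prod_congr rfl fun b _ => ?_
    rcases Nat.eq_zero_or_pos (k b) with h0 | hpos
    · rw [h0]; simp
    · rw [hQ', ← mul_pow]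
      have : (n : ℝ) / k b * ((k b : ℝ) / n) = 1 := by
        field_simp
      rw [this, one_pow]
  calc ∏ b, ((n : ℝ) / k b) ^ k b
      = (∏ b, ((n : ℝ) / k b) ^ k b) * 1 := by rw [mul_one]
    _ ≤ (∏ b, ((n : ℝ) / k b) ^ k b) *
        ((n + 1 : ℝ) ^ (Fintype.card 𝒳) * ((F.card : ℝ) * ∏ b, Q' b ^ k b)) := by
        refine mul_le_mul_of_nonneg_left h5 (by positivity)
    _ = (n + 1 : ℝ) ^ (Fintype.card 𝒳) * (F.card : ℝ) *
        ((∏ b, ((n : ℝ) / k b) ^ k b) * ∏ b, Q' b ^ k b) := by ring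
    _ = (n + 1 : ℝ) ^ (Fintype.card 𝒳) * (F.card : ℝ) := by rw [hcancel, mul_one]


end PermCount

section TriCount
variable {𝒳 𝒴 : Type*} [Fintype 𝒳] [DecidableEq 𝒳] [Fintype 𝒴] [DecidableEq 𝒴] {n : ℕ}


def tri (x z : Fin n → 𝒳) (y : Fin n → 𝒴) : Fin n → 𝒳 × 𝒳 × 𝒴 := fun i => (x i, z i, y i)

lemma empDist_eq_cnt (f : Fin n → 𝒳) (b : 𝒳) : empDist f b = (cnt f b : ℝ) / n := rfl

lemma empDist2_eq_cnt {β' : Type*} [Fintype β'] [DecidableEq β'] (x : Fin n → 𝒳)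
    (y : Fin n → β') (p : 𝒳 × β') :
    empDist2 x y p = (cnt (fun i => (x i, y i)) p : ℝ) / n := by
  have h : (Finset.univ.filter fun i => x i = p.1 ∧ y i = p.2)
      = Finset.univ.filter fun i => (x i, y i) = p := by
    apply Finset.filter_congr; intro i _; simp [Prod.ext_iff]
  unfold empDist2 cnt; rw [h]

lemma empDist3_eq_cnt (x z : Fin n → 𝒳) (y : Fin n → 𝒴) (p : 𝒳 × 𝒳 × 𝒴) :
    empDist3 x z y p = (cnt (tri x z y) p : ℝ) / n := by
  have h : (Finset.univ.filter fun i => x i = p.1 ∧ z i = p.2.1 ∧ y i = p.2.2)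
      = Finset.univ.filter fun i => tri x z y i = p := by
    apply Finset.filter_congr; intro i _; simp [tri, Prod.ext_iff]
  unfold empDist3 cnt; rw [h]

lemma cnt_eq_of_empDist_eq (hn : 0 < n) {f g : Fin n → 𝒳} (h : empDist f = empDist g)
    (b : 𝒳) : cnt f b = cnt g b := by
  have h1 : (cnt f b : ℝ) / n = (cnt g b : ℝ) / n := by
    rw [← empDist_eq_cnt, ← empDist_eq_cnt, h]
  have hn' : (n : ℝ) ≠ 0 := Nat.cast_ne_zero.mpr hn.ne'
  field_simp at h1
  exact_mod_cast h1

lemma tri_cnt_eq_of_empDist3_eq (hn : 0 < n) {x z z' : Fin n → 𝒳} {y : Fin n → 𝒴}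
    (h : empDist3 x z y = empDist3 x z' y) (p : 𝒳 × 𝒳 × 𝒴) :
    cnt (tri x z y) p = cnt (tri x z' y) p := by
  have h1 : (cnt (tri x z y) p : ℝ) / n = (cnt (tri x z' y) p : ℝ) / n := by
    rw [← empDist3_eq_cnt, ← empDist3_eq_cnt, h]
  have hn' : (n : ℝ) ≠ 0 := Nat.cast_ne_zero.mpr hn.ne'
  field_simp at h1
  exact_mod_cast h1

lemma typeClass_eq_cntfilter (hn : 0 < n) (g : Fin n → 𝒳) :
    typeClass n (empDist g) = Finset.univ.filter fun f : Fin n → 𝒳 => ∀ b, cnt f b = cnt g b := by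
  ext f
  simp only [typeClass, Finset.mem_filter, Finset.mem_univ, true_and]
  constructor
  · intro h b; exact cnt_eq_of_empDist_eq hn h b
  · intro h; funext b; rw [empDist_eq_cnt, empDist_eq_cnt, h b]

-- marginal count lemmas
lemma cnt_tri_sum_mid (x z : Fin n → 𝒳) (y : Fin n → 𝒴) (a : 𝒳) (c : 𝒴) :
    ∑ b, cnt (tri x z y) (a, b, c) = cnt (fun i => (x i, y i)) (a, c) := by
  rw [← cnt_pair_sum (fun i => (x i, y i)) z (a, c)]
  refine Finset.sum_congr rfl fun b _ => ?_
  exact cnt_congr fun i => by simp [tri, Prod.ext_iff]; tauto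

lemma cnt_tri_sum_last (x z : Fin n → 𝒳) (y : Fin n → 𝒴) (a b : 𝒳) :
    ∑ c, cnt (tri x z y) (a, b, c) = cnt (fun i => (x i, z i)) (a, b) := by
  rw [← cnt_pair_sum (fun i => (x i, z i)) y (a, b)]
  refine Finset.sum_congr rfl fun c _ => ?_
  exact cnt_congr fun i => by simp [tri, Prod.ext_iff]; tauto

lemma cnt_tri_sum_first (x z : Fin n → 𝒳) (y : Fin n → 𝒴) (b : 𝒳) (c : 𝒴) :
    ∑ a, cnt (tri x z y) (a, b, c) = cnt (fun i => (z i, y i)) (b, c) := by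
  rw [← cnt_pair_sum (fun i => (z i, y i)) x (b, c)]
  refine Finset.sum_congr rfl fun a _ => ?_
  exact cnt_congr fun i => by simp [tri, Prod.ext_iff]; tauto

lemma cnt_tri_sum_outer (x z : Fin n → 𝒳) (y : Fin n → 𝒴) (b : 𝒳) :
    ∑ w : 𝒳 × 𝒴, cnt (tri x z y) (w.1, b, w.2) = cnt z b := by
  rw [← cnt_pair_sum z (fun i => (x i, y i)) b]
  refine Finset.sum_congr rfl fun w _ => ?_
  exact cnt_congr fun i => by simp [tri, Prod.ext_iff]; tauto

-- real marginal lemmas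
lemma margXY_empDist3 (x z : Fin n → 𝒳) (y : Fin n → 𝒴) :
    margXY (empDist3 x z y) = empDist2 x y := by
  funext w
  obtain ⟨a, c⟩ := w
  show ∑ b, empDist3 x z y (a, b, c) = empDist2 x y (a, c)
  rw [empDist2_eq_cnt, ← cnt_tri_sum_mid x z y a c, Nat.cast_sum, Finset.sum_div]
  exact Finset.sum_congr rfl fun b _ => empDist3_eq_cnt x z y (a, b, c)

lemma margXXbar_empDist3 (x z : Fin n → 𝒳) (y : Fin n → 𝒴) :
    margXXbar (empDist3 x z y) = empDist2 x z := by
  funext w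
  obtain ⟨a, b⟩ := w
  show ∑ c, empDist3 x z y (a, b, c) = empDist2 x z (a, b)
  rw [empDist2_eq_cnt, ← cnt_tri_sum_last x z y a b, Nat.cast_sum, Finset.sum_div]
  exact Finset.sum_congr rfl fun c _ => empDist3_eq_cnt x z y (a, b, c)

lemma margXbarY_empDist3 (x z : Fin n → 𝒳) (y : Fin n → 𝒴) :
    margXbarY (empDist3 x z y) = empDist2 z y := by
  funext w
  obtain ⟨b, c⟩ := w
  show ∑ a, empDist3 x z y (a, b, c) = empDist2 z y (b, c)
  rw [empDist2_eq_cnt, ← cnt_tri_sum_first x z y b c, Nat.cast_sum, Finset.sum_div]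
  exact Finset.sum_congr rfl fun a _ => empDist3_eq_cnt x z y (a, b, c)

lemma margXbar_empDist3 (x z : Fin n → 𝒳) (y : Fin n → 𝒴) :
    margXbar (empDist3 x z y) = empDist z := by
  funext b
  show ∑ a, ∑ c, empDist3 x z y (a, b, c) = empDist z b
  have hre : ∑ a, ∑ c, empDist3 x z y (a, b, c)
      = ∑ w : 𝒳 × 𝒴, empDist3 x z y (w.1, b, w.2) :=
    (Fintype.sum_prod_type (f := fun w : 𝒳 × 𝒴 => empDist3 x z y (w.1, b, w.2))).symm
  rw [hre, empDist_eq_cnt, ← cnt_tri_sum_outer x z y b, Nat.cast_sum, Finset.sum_div]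
  exact Finset.sum_congr rfl fun w _ => empDist3_eq_cnt x z y (w.1, b, w.2)

-- mutual information re-expressed
def swapE (α β γ : Type*) : α × β × γ ≃ β × α × γ :=
  ⟨fun p => (p.2.1, p.1, p.2.2), fun q => (q.2.1, q.1, q.2.2), fun p => rfl, fun q => rfl⟩

lemma miXbarXY_eq {α β γ : Type*} [Fintype α] [Fintype β] [Fintype γ] (V : α × β × γ → ℝ) :
    miXbarXY V = ∑ p : α × β × γ,
      V p * Real.log (V p / (margXbar V p.2.1 * margXY V (p.1, p.2.2))) := by
  have hfst : ∀ b : β, fstMarg (fun q : β × α × γ => V (q.2.1, q.1, q.2.2)) b = margXbar V b := by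
    intro b
    show ∑ w : α × γ, V (w.1, b, w.2) = margXbar V b
    exact Fintype.sum_prod_type (f := fun w : α × γ => V (w.1, b, w.2))
  have hsnd : ∀ w : α × γ,
      sndMarg (fun q : β × α × γ => V (q.2.1, q.1, q.2.2)) w = margXY V w := by
    intro w; rfl
  unfold miXbarXY mutualInfo
  refine (Fintype.sum_equiv (swapE α β γ) _ _ fun p => ?_).symm
  simp only [swapE, Equiv.coe_fn_mk]
  rw [hfst, hsnd]


lemma fiber_bound (hn : 0 < n) (x zs : Fin n → 𝒳) (y : Fin n → 𝒴) :
    (((Finset.univ.filter fun z : Fin n → 𝒳 =>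
        ∀ p : 𝒳 × 𝒳 × 𝒴, cnt (tri x z y) p = cnt (tri x zs y) p).card : ℝ))
      ≤ ∏ p : 𝒳 × 𝒳 × 𝒴, ((cnt (fun i => (x i, y i)) (p.1, p.2.2) : ℝ)
          / cnt (tri x zs y) p) ^ cnt (tri x zs y) p := by
  classical
  set N : 𝒳 × 𝒳 × 𝒴 → ℕ := fun p => cnt (tri x zs y) p with hN
  set M : 𝒳 × 𝒴 → ℕ := fun w => cnt (fun i => (x i, y i)) w with hM
  set G := Finset.univ.filter fun z : Fin n → 𝒳 => ∀ p : 𝒳 × 𝒳 × 𝒴, cnt (tri x z y) p = N p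
    with hG
  have hNM : ∀ a c, ∑ b, N (a, b, c) = M (a, c) := fun a c => cnt_tri_sum_mid x zs y a c
  have hMpos : ∀ i : Fin n, 0 < M (x i, y i) := by
    intro i
    refine Finset.card_pos.mpr ⟨i, ?_⟩
    simp [hM, cnt]
  set P : Fin n → 𝒳 → ℝ := fun i b => (N (x i, b, y i) : ℝ) / M (x i, y i) with hP
  have hPsum : ∀ i, ∑ b, P i b = 1 := by
    intro i
    rw [hP]
    simp only
    rw [← Finset.sum_div, ← Nat.cast_sum, hNM]
    exact div_self (by exact_mod_cast (hMpos i).ne')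
  have h1 : (1 : ℝ) = ∑ z : Fin n → 𝒳, ∏ i, P i (z i) := by
    calc (1 : ℝ) = ∏ i : Fin n, ∑ b, P i b := by simp [hPsum]
      _ = ∑ z ∈ Fintype.piFinset (fun _ : Fin n => (Finset.univ : Finset 𝒳)), ∏ i, P i (z i) :=
          Finset.prod_univ_sum _ _
      _ = ∑ z : Fin n → 𝒳, ∏ i, P i (z i) := by rw [Fintype.piFinset_univ]
  have h2 : ∀ z ∈ G, ∏ i, P i (z i) = ∏ p : 𝒳 × 𝒳 × 𝒴, ((N p : ℝ) / M (p.1, p.2.2)) ^ N p := by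
    intro z hz
    have hz' := (Finset.mem_filter.mp hz).2
    calc ∏ i, P i (z i)
        = ∏ i, ((N (tri x z y i) : ℝ) / M ((tri x z y i).1, (tri x z y i).2.2)) := rfl
      _ = ∏ p : 𝒳 × 𝒳 × 𝒴, (((N p : ℝ) / M (p.1, p.2.2)) ^ cnt (tri x z y) p) :=
          prod_comp_cnt (tri x z y) (fun p => ((N p : ℝ) / M (p.1, p.2.2)))
      _ = ∏ p : 𝒳 × 𝒳 × 𝒴, ((N p : ℝ) / M (p.1, p.2.2)) ^ N p := by
          exact Finset.prod_congr rfl fun p _ => by rw [hz' p]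
  have h3 : (G.card : ℝ) * ∏ p : 𝒳 × 𝒳 × 𝒴, ((N p : ℝ) / M (p.1, p.2.2)) ^ N p ≤ 1 := by
    rw [h1]
    calc (G.card : ℝ) * ∏ p : 𝒳 × 𝒳 × 𝒴, ((N p : ℝ) / M (p.1, p.2.2)) ^ N p
        = ∑ _z ∈ G, ∏ p : 𝒳 × 𝒳 × 𝒴, ((N p : ℝ) / M (p.1, p.2.2)) ^ N p := by
          rw [Finset.sum_const, nsmul_eq_mul]
      _ = ∑ z ∈ G, ∏ i, P i (z i) := (Finset.sum_congr rfl fun z hz => (h2 z hz).symm)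
      _ ≤ ∑ z : Fin n → 𝒳, ∏ i, P i (z i) := by
          refine Finset.sum_le_sum_of_subset_of_nonneg (Finset.subset_univ _) ?_
          intro z _ _
          refine Finset.prod_nonneg fun i _ => ?_
          positivity
  have hNleM : ∀ p : 𝒳 × 𝒳 × 𝒴, N p ≤ M (p.1, p.2.2) := by
    intro p
    rw [← hNM p.1 p.2.2]
    exact Finset.single_le_sum (f := fun b => N (p.1, b, p.2.2))
      (fun b _ => Nat.zero_le _) (Finset.mem_univ p.2.1)
  have hcancel : (∏ p : 𝒳 × 𝒳 × 𝒴, ((M (p.1, p.2.2) : ℝ) / N p) ^ N p)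
      * ∏ p : 𝒳 × 𝒳 × 𝒴, ((N p : ℝ) / M (p.1, p.2.2)) ^ N p = 1 := by
    rw [← Finset.prod_mul_distrib]
    rw [show (1 : ℝ) = ∏ _p : 𝒳 × 𝒳 × 𝒴, (1 : ℝ) by simp]
    refine Finset.prod_congr rfl fun p _ => ?_
    rcases Nat.eq_zero_or_pos (N p) with h0 | hpos
    · rw [h0]; simp
    · have hMp : 0 < M (p.1, p.2.2) := lt_of_lt_of_le hpos (hNleM p)
      rw [← mul_pow]
      have : (M (p.1, p.2.2) : ℝ) / N p * ((N p : ℝ) / M (p.1, p.2.2)) = 1 := by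
        field_simp
      rw [this, one_pow]
  calc (G.card : ℝ)
      = (G.card : ℝ) * ((∏ p : 𝒳 × 𝒳 × 𝒴, ((N p : ℝ) / M (p.1, p.2.2)) ^ N p)
          * ∏ p : 𝒳 × 𝒳 × 𝒴, ((M (p.1, p.2.2) : ℝ) / N p) ^ N p) := by
        rw [mul_comm (∏ p : 𝒳 × 𝒳 × 𝒴, ((N p : ℝ) / M (p.1, p.2.2)) ^ N p), hcancel, mul_one]
    _ = ((G.card : ℝ) * ∏ p : 𝒳 × 𝒳 × 𝒴, ((N p : ℝ) / M (p.1, p.2.2)) ^ N p)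
          * ∏ p : 𝒳 × 𝒳 × 𝒴, ((M (p.1, p.2.2) : ℝ) / N p) ^ N p := by ring
    _ ≤ 1 * ∏ p : 𝒳 × 𝒳 × 𝒴, ((M (p.1, p.2.2) : ℝ) / N p) ^ N p := by
        refine mul_le_mul_of_nonneg_right h3 ?_
        refine Finset.prod_nonneg fun p _ => ?_
        positivity
    _ = ∏ p : 𝒳 × 𝒳 × 𝒴, ((M (p.1, p.2.2) : ℝ) / N p) ^ N p := one_mul _

lemma prod_MN_eq (hn : 0 < n) (x zs : Fin n → 𝒳) (y : Fin n → 𝒴) :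
    ∏ p : 𝒳 × 𝒳 × 𝒴, ((cnt (fun i => (x i, y i)) (p.1, p.2.2) : ℝ)
        / cnt (tri x zs y) p) ^ cnt (tri x zs y) p
      = Real.exp (-(n : ℝ) * miXbarXY (empDist3 x zs y))
        * ∏ b, ((n : ℝ) / cnt zs b) ^ cnt zs b := by
  classical
  set N : 𝒳 × 𝒳 × 𝒴 → ℕ := fun p => cnt (tri x zs y) p with hN
  set M : 𝒳 × 𝒴 → ℕ := fun w => cnt (fun i => (x i, y i)) w with hM
  set k : 𝒳 → ℕ := fun b => cnt zs b with hk
  have hnR : (0 : ℝ) < n := by exact_mod_cast hn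
  have hNleM : ∀ p : 𝒳 × 𝒳 × 𝒴, N p ≤ M (p.1, p.2.2) := by
    intro p
    rw [hM]
    simp only
    rw [← cnt_tri_sum_mid x zs y p.1 p.2.2]
    exact Finset.single_le_sum (f := fun b => cnt (tri x zs y) (p.1, b, p.2.2))
      (fun b _ => Nat.zero_le _) (Finset.mem_univ p.2.1)
  have hNlek : ∀ p : 𝒳 × 𝒳 × 𝒴, N p ≤ k p.2.1 := by
    intro p
    rw [hk]
    simp only
    rw [← cnt_tri_sum_outer x zs y p.2.1]
    exact Finset.single_le_sum (f := fun w : 𝒳 × 𝒴 => cnt (tri x zs y) (w.1, p.2.1, w.2))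
      (fun w _ => Nat.zero_le _) (Finset.mem_univ (p.1, p.2.2))
  -- step 1 : the exponent as a sum
  have step1 : -(n : ℝ) * miXbarXY (empDist3 x zs y)
      = ∑ p : 𝒳 × 𝒳 × 𝒴, (N p : ℝ)
          * Real.log ((k p.2.1 : ℝ) * M (p.1, p.2.2) / ((n : ℝ) * N p)) := by
    rw [miXbarXY_eq, Finset.mul_sum]
    refine Finset.sum_congr rfl fun p _ => ?_
    rw [margXbar_empDist3, margXY_empDist3, empDist3_eq_cnt, empDist_eq_cnt, empDist2_eq_cnt]
    rcases Nat.eq_zero_or_pos (N p) with h0 | hpos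
    · rw [show cnt (tri x zs y) p = N p from rfl, h0]
      simp
    · have hkp : 0 < k p.2.1 := lt_of_lt_of_le hpos (hNlek p)
      have hMp : 0 < M (p.1, p.2.2) := lt_of_lt_of_le hpos (hNleM p)
      have hkR : (0 : ℝ) < k p.2.1 := by exact_mod_cast hkp
      have hMR : (0 : ℝ) < M (p.1, p.2.2) := by exact_mod_cast hMp
      have hNR : (0 : ℝ) < N p := by exact_mod_cast hpos
      rw [show cnt (tri x zs y) p = N p from rfl,
          show cnt zs p.2.1 = k p.2.1 from rfl,
          show cnt (fun i => (x i, y i)) (p.1, p.2.2) = M (p.1, p.2.2) from rfl]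
      have harg : ((N p : ℝ) / n) / ((k p.2.1 : ℝ) / n * ((M (p.1, p.2.2) : ℝ) / n))
          = ((n : ℝ) * N p) / ((k p.2.1 : ℝ) * M (p.1, p.2.2)) := by
        field_simp
      rw [harg, Real.log_div (by positivity) (by positivity),
          Real.log_div (by positivity) (by positivity)]
      field_simp
      ring
  -- step 2 : exponential of the sum as a product
  have step2 : Real.exp (∑ p : 𝒳 × 𝒳 × 𝒴, (N p : ℝ)
        * Real.log ((k p.2.1 : ℝ) * M (p.1, p.2.2) / ((n : ℝ) * N p)))
      = ∏ p : 𝒳 × 𝒳 × 𝒴,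
          ((k p.2.1 : ℝ) * M (p.1, p.2.2) / ((n : ℝ) * N p)) ^ N p := by
    rw [Real.exp_sum]
    refine Finset.prod_congr rfl fun p _ => ?_
    rcases Nat.eq_zero_or_pos (N p) with h0 | hpos
    · rw [h0]; simp
    · have hkp : 0 < k p.2.1 := lt_of_lt_of_le hpos (hNlek p)
      have hMp : 0 < M (p.1, p.2.2) := lt_of_lt_of_le hpos (hNleM p)
      have ht : (0 : ℝ) < (k p.2.1 : ℝ) * M (p.1, p.2.2) / ((n : ℝ) * N p) := by
        have hNR : (0 : ℝ) < N p := by exact_mod_cast hpos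
        have hkR : (0 : ℝ) < k p.2.1 := by exact_mod_cast hkp
        have hMR : (0 : ℝ) < M (p.1, p.2.2) := by exact_mod_cast hMp
        positivity
      rw [Real.exp_nat_mul, Real.exp_log ht]
  -- step 3 : split the product
  have step3 : ∏ p : 𝒳 × 𝒳 × 𝒴, ((M (p.1, p.2.2) : ℝ) / N p) ^ N p
      = (∏ p : 𝒳 × 𝒳 × 𝒴, ((k p.2.1 : ℝ) * M (p.1, p.2.2) / ((n : ℝ) * N p)) ^ N p)
        * ∏ p : 𝒳 × 𝒳 × 𝒴, ((n : ℝ) / k p.2.1) ^ N p := by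
    rw [← Finset.prod_mul_distrib]
    refine Finset.prod_congr rfl fun p _ => ?_
    rcases Nat.eq_zero_or_pos (N p) with h0 | hpos
    · rw [h0]; simp
    · have hkp : 0 < k p.2.1 := lt_of_lt_of_le hpos (hNlek p)
      have hkR : (0 : ℝ) < k p.2.1 := by exact_mod_cast hkp
      have hNR : (0 : ℝ) < N p := by exact_mod_cast hpos
      rw [← mul_pow]
      congr 1
      field_simp
  -- step 4 : regroup the last product
  have step4 : ∏ p : 𝒳 × 𝒳 × 𝒴, ((n : ℝ) / k p.2.1) ^ N p
      = ∏ b, ((n : ℝ) / k b) ^ k b := by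
    have hre : ∏ p : 𝒳 × 𝒳 × 𝒴, ((n : ℝ) / k p.2.1) ^ N p
        = ∏ q : 𝒳 × 𝒳 × 𝒴, ((n : ℝ) / k q.1) ^ N (q.2.1, q.1, q.2.2) :=
      Fintype.prod_equiv (swapE 𝒳 𝒳 𝒴) _ _ fun p => rfl
    rw [hre]
    have hre2 : ∏ q : 𝒳 × 𝒳 × 𝒴, ((n : ℝ) / k q.1) ^ N (q.2.1, q.1, q.2.2)
        = ∏ b : 𝒳, ∏ w : 𝒳 × 𝒴, ((n : ℝ) / k b) ^ N (w.1, b, w.2) :=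
      Fintype.prod_prod_type (f := fun q : 𝒳 × (𝒳 × 𝒴) => ((n : ℝ) / k q.1) ^ N (q.2.1, q.1, q.2.2))
    rw [hre2]
    refine Finset.prod_congr rfl fun b _ => ?_
    rw [Finset.prod_pow_eq_pow_sum]
    congr 1
    exact cnt_tri_sum_outer x zs y b
  calc ∏ p : 𝒳 × 𝒳 × 𝒴, ((M (p.1, p.2.2) : ℝ) / N p) ^ N p
      = (∏ p : 𝒳 × 𝒳 × 𝒴, ((k p.2.1 : ℝ) * M (p.1, p.2.2) / ((n : ℝ) * N p)) ^ N p)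
        * ∏ p : 𝒳 × 𝒳 × 𝒴, ((n : ℝ) / k p.2.1) ^ N p := step3
    _ = Real.exp (-(n : ℝ) * miXbarXY (empDist3 x zs y)) * ∏ b, ((n : ℝ) / k b) ^ k b := by
        rw [step1, step2, step4]



end TriCount

end Statement12Aux

/-- Method-of-types bound on the fraction of sequences
`x̄ ∈ T^n(Q')` at distance greater than `Δ` from `x` whose metric value exceeds `a`:
`|{x̄ ∈ T^n(Q') : d(P̂_{x x̄}) > Δ, q(j, P̂_{x̄ y}) ≥ a}| / |T^n(Q')|
  ≤ (n+1)^{|𝒳|²|𝒴| + |𝒳|} max_V exp(−n I_V(X̄; X, Y))`,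
the maximum being over joint types `V` of triples in `𝒳^n × 𝒳^n × 𝒴^n` with
`V_XY = P̂_{x y}`, `V_X̄ = Q'`, `d(V_XX̄) > Δ` and `q(j, V_X̄Y) ≥ a`
(the maximum being `0` if no such `V` exists, realized below by `sSup (insert 0 ·)`). -/
theorem statement_12 {𝒳 𝒴 : Type*} [Fintype 𝒳] [DecidableEq 𝒳] [Fintype 𝒴]
    [DecidableEq 𝒴] {n : ℕ} (hn : 0 < n)
    (Q Q' : 𝒳 → ℝ) (hQ' : ∃ z : Fin n → 𝒳, empDist z = Q')
    (x : Fin n → 𝒳) (hx : x ∈ typeClass n Q) (y : Fin n → 𝒴) (Δ a : ℝ)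
    (dd : (𝒳 × 𝒳 → ℝ) → ℝ) (hdd : ∀ p : 𝒳 × 𝒳 → ℝ, dd (fun r => p (r.2, r.1)) = dd p)
    (q : (𝒳 × 𝒴 → ℝ) → ℝ) :
    (((typeClass n Q').filter fun z =>
          Δ < dd (empDist2 x z) ∧ a ≤ q (empDist2 z y)).card : ℝ) /
        ((typeClass n Q').card : ℝ)
      ≤ (n + 1 : ℝ) ^ (Fintype.card 𝒳 ^ 2 * Fintype.card 𝒴 + Fintype.card 𝒳) *
          sSup (insert (0 : ℝ)
            ((fun V => Real.exp (-(n : ℝ) * miXbarXY V)) ''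
              {V : 𝒳 × 𝒳 × 𝒴 → ℝ |
                (∃ (x₁ x₂ : Fin n → 𝒳) (y₁ : Fin n → 𝒴), V = empDist3 x₁ x₂ y₁) ∧
                margXY V = empDist2 x y ∧ margXbar V = Q' ∧
                Δ < dd (margXXbar V) ∧ a ≤ q (margXbarY V)})) := by
  classical
  set T := typeClass n Q' with hT
  set A := T.filter (fun z => Δ < dd (empDist2 x z) ∧ a ≤ q (empDist2 z y)) with hA
  set 𝒮 : Set (𝒳 × 𝒳 × 𝒴 → ℝ) := {V : 𝒳 × 𝒳 × 𝒴 → ℝ |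
      (∃ (x₁ x₂ : Fin n → 𝒳) (y₁ : Fin n → 𝒴), V = empDist3 x₁ x₂ y₁) ∧
      margXY V = empDist2 x y ∧ margXbar V = Q' ∧
      Δ < dd (margXXbar V) ∧ a ≤ q (margXbarY V)} with hSdef
  set s := sSup (insert (0 : ℝ) ((fun V => Real.exp (-(n : ℝ) * miXbarXY V)) '' 𝒮)) with hs
  have hfinS : 𝒮.Finite := by
    apply Set.Finite.subset (Set.finite_range
      (fun t : (Fin n → 𝒳) × (Fin n → 𝒳) × (Fin n → 𝒴) => empDist3 t.1 t.2.1 t.2.2))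
    rintro V ⟨⟨x₁, x₂, y₁, hV⟩, -⟩
    exact ⟨(x₁, x₂, y₁), hV.symm⟩
  have hbdd : BddAbove (insert (0 : ℝ)
      ((fun V => Real.exp (-(n : ℝ) * miXbarXY V)) '' 𝒮)) :=
    ((hfinS.image _).insert 0).bddAbove
  have hs0 : (0 : ℝ) ≤ s := le_csSup hbdd (Set.mem_insert _ _)
  set φ : (Fin n → 𝒳) → (𝒳 × 𝒳 × 𝒴 → ℝ) := fun z => empDist3 x z y with hφ
  -- the number of joint types is polynomial
  have himg : ((A.image φ).card : ℝ)
      ≤ (n + 1 : ℝ) ^ (Fintype.card 𝒳 ^ 2 * Fintype.card 𝒴) := by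
    have hrec : ∀ z : Fin n → 𝒳, ∀ p : 𝒳 × 𝒳 × 𝒴,
        min ⌊(n : ℝ) * φ z p⌋₊ n = cnt (tri x z y) p := by
      intro z p
      rw [hφ]
      simp only
      rw [empDist3_eq_cnt]
      have hmul : (n : ℝ) * ((cnt (tri x z y) p : ℝ) / n) = (cnt (tri x z y) p : ℝ) := by
        have hn' : (n : ℝ) ≠ 0 := Nat.cast_ne_zero.mpr hn.ne'
        field_simp
      rw [hmul, Nat.floor_natCast, min_eq_left (cnt_le _ _)]
    have h1 : (A.image φ).card ≤ Fintype.card (𝒳 × 𝒳 × 𝒴 → Fin (n + 1)) := by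
      rw [← Finset.card_univ]
      refine Finset.card_le_card_of_injOn
        (fun V p => (⟨min ⌊(n : ℝ) * V p⌋₊ n, Nat.lt_succ_of_le (min_le_right _ _)⟩ : Fin (n+1)))
        (fun _ _ => Finset.mem_univ _) ?_
      intro V hV W hW hVW
      rw [Finset.mem_coe, Finset.mem_image] at hV hW
      obtain ⟨z, hzA, rfl⟩ := hV
      obtain ⟨z', hz'A, rfl⟩ := hW
      funext p
      have h2 := congrArg Fin.val (congrFun hVW p)
      simp only at h2
      rw [hrec z p, hrec z' p] at h2
      rw [hφ]
      simp only
      rw [empDist3_eq_cnt, empDist3_eq_cnt, h2]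
    calc ((A.image φ).card : ℝ) ≤ (Fintype.card (𝒳 × 𝒳 × 𝒴 → Fin (n + 1)) : ℝ) := by
          exact_mod_cast h1
      _ = (n + 1 : ℝ) ^ (Fintype.card 𝒳 ^ 2 * Fintype.card 𝒴) := by
          rw [Fintype.card_fun, Fintype.card_fin, Fintype.card_prod, Fintype.card_prod]
          rw [show Fintype.card 𝒳 * (Fintype.card 𝒳 * Fintype.card 𝒴)
              = Fintype.card 𝒳 ^ 2 * Fintype.card 𝒴 by ring]
          push_cast
          ring
  -- the per-type fiber bound
  have hper : ∀ V ∈ A.image φ, ((A.filter fun z => φ z = V).card : ℝ)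
      ≤ s * ((n + 1 : ℝ) ^ (Fintype.card 𝒳) * (T.card : ℝ)) := by
    intro V hV
    obtain ⟨zs, hzsA, hzsV⟩ := Finset.mem_image.mp hV
    have hzs := Finset.mem_filter.mp hzsA
    have hzsT : empDist zs = Q' := (Finset.mem_filter.mp hzs.1).2
    have hVmem : V ∈ 𝒮 := by
      refine ⟨⟨x, zs, y, hzsV.symm⟩, ?_, ?_, ?_, ?_⟩
      · rw [← hzsV]; exact margXY_empDist3 x zs y
      · rw [← hzsV]; rw [show φ zs = empDist3 x zs y from rfl, margXbar_empDist3]; exact hzsT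
      · rw [← hzsV]; rw [show φ zs = empDist3 x zs y from rfl, margXXbar_empDist3]
        exact hzs.2.1
      · rw [← hzsV]; rw [show φ zs = empDist3 x zs y from rfl, margXbarY_empDist3]
        exact hzs.2.2
    have hVs : Real.exp (-(n : ℝ) * miXbarXY V) ≤ s :=
      le_csSup hbdd (Set.mem_insert_of_mem _ ⟨V, hVmem, rfl⟩)
    have hsub : (A.filter fun z => φ z = V) ⊆ (Finset.univ.filter fun z : Fin n → 𝒳 =>
        ∀ p : 𝒳 × 𝒳 × 𝒴, cnt (tri x z y) p = cnt (tri x zs y) p) := by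
      intro z hz
      have hzV : φ z = V := (Finset.mem_filter.mp hz).2
      refine Finset.mem_filter.mpr ⟨Finset.mem_univ _, ?_⟩
      exact tri_cnt_eq_of_empDist3_eq hn (by rw [show empDist3 x z y = φ z from rfl, hzV, ← hzsV])
    have hTeq : T = Finset.univ.filter fun f : Fin n → 𝒳 => ∀ b, cnt f b = cnt zs b := by
      rw [hT, ← hzsT]
      exact typeClass_eq_cntfilter hn zs
    calc ((A.filter fun z => φ z = V).card : ℝ)
        ≤ ((Finset.univ.filter fun z : Fin n → 𝒳 =>
            ∀ p : 𝒳 × 𝒳 × 𝒴, cnt (tri x z y) p = cnt (tri x zs y) p).card : ℝ) := by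
          exact_mod_cast Finset.card_le_card hsub
      _ ≤ ∏ p : 𝒳 × 𝒳 × 𝒴, ((cnt (fun i => (x i, y i)) (p.1, p.2.2) : ℝ)
            / cnt (tri x zs y) p) ^ cnt (tri x zs y) p := fiber_bound hn x zs y
      _ = Real.exp (-(n : ℝ) * miXbarXY (empDist3 x zs y))
            * ∏ b, ((n : ℝ) / cnt zs b) ^ cnt zs b := prod_MN_eq hn x zs y
      _ = Real.exp (-(n : ℝ) * miXbarXY V) * ∏ b, ((n : ℝ) / cnt zs b) ^ cnt zs b := by
          rw [show empDist3 x zs y = φ zs from rfl, hzsV]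
      _ ≤ s * ((n + 1 : ℝ) ^ (Fintype.card 𝒳) * (T.card : ℝ)) := by
          refine mul_le_mul hVs ?_ (Finset.prod_nonneg fun b _ => by positivity) hs0
          calc ∏ b, ((n : ℝ) / cnt zs b) ^ cnt zs b
              ≤ (n + 1 : ℝ) ^ (Fintype.card 𝒳) *
                ((Finset.univ.filter fun f : Fin n → 𝒳 => ∀ b, cnt f b = cnt zs b).card : ℝ) :=
                typeclass_lower hn zs
            _ = (n + 1 : ℝ) ^ (Fintype.card 𝒳) * (T.card : ℝ) := by rw [← hTeq]
  -- combine
  have hmain : (A.card : ℝ) ≤ ((A.image φ).card : ℝ)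
      * (s * ((n + 1 : ℝ) ^ (Fintype.card 𝒳) * (T.card : ℝ))) := by
    rw [Finset.card_eq_sum_card_image φ A, Nat.cast_sum]
    calc ∑ V ∈ A.image φ, ((A.filter fun z => φ z = V).card : ℝ)
        ≤ ∑ _V ∈ A.image φ, s * ((n + 1 : ℝ) ^ (Fintype.card 𝒳) * (T.card : ℝ)) :=
          Finset.sum_le_sum hper
      _ = ((A.image φ).card : ℝ) * (s * ((n + 1 : ℝ) ^ (Fintype.card 𝒳) * (T.card : ℝ))) := by
          rw [Finset.sum_const, nsmul_eq_mul]
  rcases Nat.eq_zero_or_pos T.card with h0 | hpos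
  · have hA0 : A.card = 0 :=
      Nat.le_zero.mp (h0 ▸ Finset.card_le_card (Finset.filter_subset _ _))
    rw [hA0]
    rw [Nat.cast_zero, zero_div]
    exact mul_nonneg (by positivity) hs0
  · have hTpos : (0 : ℝ) < (T.card : ℝ) := by exact_mod_cast hpos
    rw [div_le_iff₀ hTpos]
    calc (A.card : ℝ)
        ≤ ((A.image φ).card : ℝ)
          * (s * ((n + 1 : ℝ) ^ (Fintype.card 𝒳) * (T.card : ℝ))) := hmain
      _ ≤ (n + 1 : ℝ) ^ (Fintype.card 𝒳 ^ 2 * Fintype.card 𝒴)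
          * (s * ((n + 1 : ℝ) ^ (Fintype.card 𝒳) * (T.card : ℝ))) := by
          refine mul_le_mul_of_nonneg_right himg ?_
          exact mul_nonneg hs0 (by positivity)
      _ = (n + 1 : ℝ) ^ (Fintype.card 𝒳 ^ 2 * Fintype.card 𝒴 + Fintype.card 𝒳) * s
          * (T.card : ℝ) := by
          rw [pow_add]
          ring

end RGV
end
end
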